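/- Let n ≥ 4 and let \hat Q_n be the minority cube with arc set F_n. If F_n contains a chain twist C and F_{n-1} contains no chain twist, then C contains the bridge arc (01z10, 01z11), where z denotes the all-zero string of length n-4. -/
import Mathlib


/-! ## Bit-string vertices -/

/-- The bit string of length `n` whose ones are exactly at the positions in `s`. -/
def oneAt (n : ℕ) (s : List ℕ) : Fin n → Bool := fun i => decide (i.val ∈ s)

/-- The vertex `01 0^{n-4} 0 0`. -/
def vA (n : ℕ) : Fin n → Bool := oneAt n [1]
/-- The vertex `01 0^{n-4} 0 1`. -/
def vB (n : ℕ) : Fin n → Bool := oneAt n [1, n-1]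
/-- The vertex `10 0^{n-4} 1 0`. -/
def vC (n : ℕ) : Fin n → Bool := oneAt n [0, n-2]
/-- The vertex `10 0^{n-4} 1 1`. -/
def vD (n : ℕ) : Fin n → Bool := oneAt n [0, n-2, n-1]
/-- The tail `01 0^{n-4} 1 0` of the bridge arc. -/
def bridgeTail (n : ℕ) : Fin n → Bool := oneAt n [1, n-2]
/-- The head `01 0^{n-4} 1 1` of the bridge arc. -/
def bridgeHead (n : ℕ) : Fin n → Bool := oneAt n [1, n-2, n-1]

/-! ## The minority cube -/

/-- The matching joining the two copies of `\hat Q_n` in the construction of the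
minority cube `\hat Q_{n+1}`: the standard matching (vertices differing only in
the last bit), except that the standard edges `vA–vB` and `vC–vD` are replaced by
the twisted edges `vA–vD` and `vC–vB`. -/
def matchRel (n : ℕ) (u v : Fin (n+1) → Bool) : Prop :=
  (Fin.init u = Fin.init v ∧ u (Fin.last n) ≠ v (Fin.last n) ∧
    ({u, v} : Set (Fin (n+1) → Bool)) ≠ {vA (n+1), vB (n+1)} ∧
    ({u, v} : Set (Fin (n+1) → Bool)) ≠ {vC (n+1), vD (n+1)}) ∨
  ({u, v} : Set (Fin (n+1) → Bool)) = {vA (n+1), vD (n+1)} ∨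
  ({u, v} : Set (Fin (n+1) → Bool)) = {vC (n+1), vB (n+1)}

/-- Hypercube adjacency: differ in exactly one position. -/
def cubeRel (n : ℕ) (u v : Fin n → Bool) : Prop := ∃! i, u i ≠ v i

/-- The adjacency relation of the minority cube `\hat Q_n`: for `n ≤ 3` it is the
hypercube `Q_n`; for `n ≥ 4` two vertices are adjacent if they lie in the same copy
of `\hat Q_{n-1}` (same last bit) and are adjacent there, or they are joined by the
matching between the copies. -/
def minRel : (n : ℕ) → (Fin n → Bool) → (Fin n → Bool) → Prop
  | 0 => cubeRel 0
  | 1 => cubeRel 1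
  | 2 => cubeRel 2
  | 3 => cubeRel 3
  | (n+4) => fun u v =>
      (u (Fin.last (n+3)) = v (Fin.last (n+3)) ∧
        minRel (n+3) (Fin.init u) (Fin.init v)) ∨ matchRel (n+3) u v

/-- The minority cube `\hat Q_n` as a simple graph on `{0,1}^n`. -/
def hatQ (n : ℕ) : SimpleGraph (Fin n → Bool) := SimpleGraph.fromRel (minRel n)

/-- Append the bit `b` to both coordinates of a pair of bit strings. -/
def snocPair {n : ℕ} (p : (Fin n → Bool) × (Fin n → Bool)) (b : Bool) :
    (Fin (n+1) → Bool) × (Fin (n+1) → Bool) := (Fin.snoc p.1 b, Fin.snoc p.2 b)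

/-- The arc set `F_n` of the minority cube: `F_3` consists of the four arcs
`000→100, 100→110, 001→101, 101→111`; and `F_{n+1}` is the union of the two copies of
`F_n` (labels extended by the appended bit) together with the bridge arc
`01 0^{n-3} 1 0 → 01 0^{n-3} 1 1`. -/
def minF : (n : ℕ) → Set ((Fin n → Bool) × (Fin n → Bool))
  | 0 => ∅
  | 1 => ∅
  | 2 => ∅
  | 3 => {(oneAt 3 [], oneAt 3 [0]), (oneAt 3 [0], oneAt 3 [0,1]),
          (oneAt 3 [2], oneAt 3 [0,2]), (oneAt 3 [0,2], oneAt 3 [0,1,2])}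
  | (n+4) => (⋃ b : Bool, (fun p => snocPair p b) '' minF (n+3))
             ∪ {(bridgeTail (n+4), bridgeHead (n+4))}

/-! ## Arc sets, chains, chain twists -/

/-- `F` is an arc set of `G`: every pair in `F` is an edge of `G`,
and no arc appears in both orientations. -/
def IsArcSet {V : Type*} (G : SimpleGraph V) (F : Set (V × V)) : Prop :=
  ∀ p ∈ F, G.Adj p.1 p.2 ∧ (p.2, p.1) ∉ F

/-- A vertex is isolated in an arc set `F` if it is incident to no arc of `F`. -/
def IsIsolatedVtx {V : Type*} (F : Set (V × V)) (v : V) : Prop :=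
  ∀ u, (u, v) ∉ F ∧ (v, u) ∉ F

/-- A chain twist of the arc set `F` in `G`: a cycle `c` (at least 3 distinct
vertices, consecutive ones adjacent, indices mod `k`) such that whenever an edge of
the cycle is not a (forward) arc of `F`, the preceding and following edges are. -/
def IsChainTwist {V : Type*} (G : SimpleGraph V) (F : Set (V × V)) {k : ℕ}
    (c : ZMod k → V) : Prop :=
  3 ≤ k ∧ Function.Injective c ∧ (∀ i, G.Adj (c i) (c (i+1))) ∧
  ∀ i, (c i, c (i+1)) ∉ F → ((c (i-1), c i) ∈ F ∧ (c (i+1), c (i+2)) ∈ F)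

/-- `F` contains a chain twist in `G`. -/
def HasChainTwist {V : Type*} (G : SimpleGraph V) (F : Set (V × V)) : Prop :=
  ∃ (k : ℕ) (c : ZMod k → V), IsChainTwist G F c

/-- A chain twist path of the arc set `F` in `G`: a path `c = v_0 v_1 … v_{k-1}`
such that for every interior index `i` (`1 ≤ i`, `i + 1 < k`), if the edge
`(v_i, v_{i+1})` is not an arc of `F`, then `(v_{i-1}, v_i)` is an arc of `F` and
(whenever the index exists) `(v_{i+1}, v_{i+2})` is an arc of `F`. -/
def IsChainTwistPath {V : Type*} (G : SimpleGraph V) (F : Set (V × V)) {k : ℕ}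
    (c : Fin k → V) : Prop :=
  Function.Injective c ∧
  (∀ i : ℕ, ∀ h : i + 1 < k, G.Adj (c ⟨i, by omega⟩) (c ⟨i+1, h⟩)) ∧
  (∀ i : ℕ, 1 ≤ i → ∀ h : i + 1 < k,
    (c ⟨i, by omega⟩, c ⟨i+1, h⟩) ∉ F →
      (c ⟨i-1, by omega⟩, c ⟨i, by omega⟩) ∈ F ∧
      ∀ h2 : i + 2 < k, (c ⟨i+1, by omega⟩, c ⟨i+2, h2⟩) ∈ F)

/-- A chain of the arc set `F` with `k` arcs: a directed path `c = v_0 → v_1 → … → v_k`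
all of whose consecutive pairs are arcs of `F`, which is maximal (no arc of `F` enters
`v_0` and no arc of `F` leaves `v_k`). -/
def IsArcChain {V : Type*} (F : Set (V × V)) {k : ℕ} (c : Fin (k+1) → V) : Prop :=
  Function.Injective c ∧
  (∀ i : ℕ, ∀ h : i + 1 < k + 1, (c ⟨i, by omega⟩, c ⟨i+1, h⟩) ∈ F) ∧
  (∀ u, (u, c 0) ∉ F) ∧ (∀ u, (c (Fin.last k), u) ∉ F)

/-! ## Zero forcing -/

/-- The zero forcing closure of the initial blue set `S` in the graph `G`:
the set of vertices eventually coloured blue by iterating the colour change rule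
"a blue vertex with exactly one white neighbour forces that neighbour". -/
inductive ZFClosure {V : Type*} (G : SimpleGraph V) (S : Set V) : V → Prop
  | init (v : V) (hv : v ∈ S) : ZFClosure G S v
  | force (u v : V) (hu : ZFClosure G S u) (huv : G.Adj u v)
      (h : ∀ w, G.Adj u w → w ≠ v → ZFClosure G S w) : ZFClosure G S v

/-- `S` is a zero forcing set of `G`: iterating the colour change rule starting from
`S` eventually colours every vertex blue. -/
def IsZeroForcingSet {V : Type*} (G : SimpleGraph V) (S : Set V) : Prop :=
  ∀ v, ZFClosure G S v

/-- The zero forcing number of a finite graph: the minimum size of a zero forcing set. -/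
noncomputable def zeroForcingNumber {V : Type*} [Fintype V] (G : SimpleGraph V) : ℕ :=
  sInf {k | ∃ S : Finset V, S.card = k ∧ IsZeroForcingSet G ↑S}

/-! ### Auxiliary lemmas for Statement 11 -/

-- helpers
lemma snoc_ext {n : ℕ} {u v : Fin (n+1) → Bool} (h1 : Fin.init u = Fin.init v)
    (h2 : u (Fin.last n) = v (Fin.last n)) : u = v := by
  rw [← Fin.snoc_init_self u, ← Fin.snoc_init_self v, h1, h2]

lemma init_oneAt {n : ℕ} (s s' : List ℕ) (h : ∀ i < n, (i ∈ s ↔ i ∈ s')) :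
    Fin.init (oneAt (n+1) s) = oneAt n s' := by
  funext i
  show decide (((i : Fin n).castSucc : Fin (n+1)).val ∈ s) = decide (i.val ∈ s')
  simp only [Fin.coe_castSucc]
  exact decide_eq_decide.mpr (h i.val i.isLt)

lemma oneAt_ne {n : ℕ} (s t : List ℕ) (j : ℕ) (hj : j < n) (h : ¬(j ∈ s ↔ j ∈ t)) :
    oneAt n s ≠ oneAt n t := by
  intro he
  have := congrFun he ⟨j, hj⟩
  simp only [oneAt, decide_eq_decide] at this
  exact h this

lemma last_oneAt {n : ℕ} (s : List ℕ) : oneAt (n+1) s (Fin.last n) = decide (n ∈ s) := rfl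

lemma mem_minF_succ {n : ℕ} {u v : Fin (n+4) → Bool} :
    (u, v) ∈ minF (n+4) ↔
      (u (Fin.last (n+3)) = v (Fin.last (n+3)) ∧ (Fin.init u, Fin.init v) ∈ minF (n+3))
      ∨ (u = bridgeTail (n+4) ∧ v = bridgeHead (n+4)) := by
  show (u, v) ∈ (⋃ b : Bool, (fun p => snocPair p b) '' minF (n+3))
             ∪ {(bridgeTail (n+4), bridgeHead (n+4))} ↔ _
  simp only [Set.mem_union, Set.mem_iUnion, Set.mem_image, Set.mem_singleton_iff,
    Prod.mk.injEq, snocPair, Prod.ext_iff]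
  constructor
  · rintro (⟨b, ⟨p, hp, h1, h2⟩⟩ | ⟨h1, h2⟩)
    · subst h1; subst h2
      left
      refine ⟨Fin.snoc_last .. ▸ (Fin.snoc_last .. ▸ rfl), ?_⟩
      rw [Fin.init_snoc, Fin.init_snoc]
      exact hp
    · right; exact ⟨h1, h2⟩
  · rintro (⟨hb, hp⟩ | ⟨h1, h2⟩)
    · left
      exact ⟨u (Fin.last (n+3)), ⟨(Fin.init u, Fin.init v), hp,
        (Fin.snoc_init_self u).symm ▸ rfl, by rw [hb]; exact (Fin.snoc_init_self v)⟩⟩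
    · right; exact ⟨h1, h2⟩

-- bridge component facts
lemma init_tail {n : ℕ} : Fin.init (bridgeTail (n+4)) = oneAt (n+3) [1, n+2] := by
  apply init_oneAt; intro i hi
  show i ∈ [1, n+4-2] ↔ _
  have : n+4-2 = n+2 := by omega
  rw [this]

lemma init_head {n : ℕ} : Fin.init (bridgeHead (n+4)) = oneAt (n+3) [1, n+2] := by
  apply init_oneAt; intro i hi
  show i ∈ [1, n+4-2, n+4-1] ↔ i ∈ [1, n+2]
  have h1 : n+4-2 = n+2 := by omega
  have h2 : n+4-1 = n+3 := by omega
  rw [h1, h2]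
  simp only [List.mem_cons, List.mem_singleton, List.not_mem_nil, or_false]
  omega

lemma tail_ne_head {n : ℕ} : bridgeTail (n+4) ≠ bridgeHead (n+4) := by
  apply oneAt_ne _ _ (n+3) (by omega)
  simp only [List.mem_cons, List.mem_singleton, List.not_mem_nil, or_false]
  omega

lemma last_tail {n : ℕ} : bridgeTail (n+4) (Fin.last (n+3)) = false := by
  rw [bridgeTail, last_oneAt, decide_eq_false_iff_not]
  simp only [List.mem_cons, List.mem_singleton, List.not_mem_nil, or_false]
  omega

lemma last_head {n : ℕ} : bridgeHead (n+4) (Fin.last (n+3)) = true := by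
  rw [bridgeHead, last_oneAt, decide_eq_true_eq]
  have : n+4-1 = n+3 := by omega
  rw [this]
  simp

-- isolation of 010...0 and 010...01
lemma isolF : ∀ (n : ℕ) (u v : Fin n → Bool), (u, v) ∈ minF n →
    (u ≠ oneAt n [1] ∧ v ≠ oneAt n [1] ∧ u ≠ oneAt n [1, n-1] ∧ v ≠ oneAt n [1, n-1]) := by
  intro n
  induction n using Nat.strong_induction_on with
  | _ n IH =>
    match n with
    | 0 => intro u v h; simp [minF] at h
    | 1 => intro u v h; simp [minF] at h
    | 2 => intro u v h; simp [minF] at h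
    | 3 =>
      intro u v h
      simp only [minF, Set.mem_insert_iff, Set.mem_singleton_iff, Prod.mk.injEq] at h
      rcases h with ⟨rfl, rfl⟩ | ⟨rfl, rfl⟩ | ⟨rfl, rfl⟩ | ⟨rfl, rfl⟩ <;>
        exact ⟨by decide, by decide, by decide, by decide⟩
    | (n+4) =>
      intro u v h
      have hinit1 : Fin.init (oneAt (n+4) [1]) = oneAt (n+3) [1] :=
        init_oneAt _ _ (fun i _ => Iff.rfl)
      have hinit2 : Fin.init (oneAt (n+4) [1, n+4-1]) = oneAt (n+3) [1] := by
        apply init_oneAt; intro i hi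
        have : n+4-1 = n+3 := by omega
        rw [this]
        simp only [List.mem_cons, List.mem_singleton, List.not_mem_nil, or_false]
        omega
      rcases mem_minF_succ.mp h with ⟨hlast, hmem⟩ | ⟨rfl, rfl⟩
      · obtain ⟨h1, h2, h3, h4⟩ := IH (n+3) (by omega) _ _ hmem
        have h1' : Fin.init u ≠ oneAt (n+3) [1] := h1
        have h2' : Fin.init v ≠ oneAt (n+3) [1] := h2
        refine ⟨?_, ?_, ?_, ?_⟩ <;> intro he
        · exact h1' (by rw [he]; exact hinit1)
        · exact h2' (by rw [he]; exact hinit1)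
        · exact h1' (by rw [he]; exact hinit2)
        · exact h2' (by rw [he]; exact hinit2)
      · refine ⟨?_, ?_, ?_, ?_⟩
        · apply oneAt_ne _ _ (n+2) (by omega)
          simp only [List.mem_cons, List.not_mem_nil, or_false]
          omega
        · apply oneAt_ne _ _ (n+2) (by omega)
          simp only [List.mem_cons, List.not_mem_nil, or_false]
          omega
        · apply oneAt_ne _ _ (n+3) (by omega)
          simp only [List.mem_cons, List.not_mem_nil, or_false]
          omega
        · apply oneAt_ne _ _ (n+2) (by omega)
          simp only [List.mem_cons, List.not_mem_nil, or_false]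
          omega

lemma irreflF : ∀ (n : ℕ) (u : Fin n → Bool), (u, u) ∉ minF n := by
  intro n
  induction n using Nat.strong_induction_on with
  | _ n IH =>
    match n with
    | 0 => intro u h; simp [minF] at h
    | 1 => intro u h; simp [minF] at h
    | 2 => intro u h; simp [minF] at h
    | 3 =>
      intro u h
      simp only [minF, Set.mem_insert_iff, Set.mem_singleton_iff, Prod.mk.injEq] at h
      rcases h with ⟨rfl, h⟩ | ⟨rfl, h⟩ | ⟨rfl, h⟩ | ⟨rfl, h⟩ <;> exact absurd h (by decide)
    | (n+4) =>
      intro u h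
      rcases mem_minF_succ.mp h with ⟨_, hmem⟩ | ⟨h1, h2⟩
      · exact IH (n+3) (by omega) _ hmem
      · exact tail_ne_head (h1 ▸ h2)

lemma antisymF : ∀ (n : ℕ) (u v : Fin n → Bool), (u, v) ∈ minF n → (v, u) ∉ minF n := by
  intro n
  induction n using Nat.strong_induction_on with
  | _ n IH =>
    match n with
    | 0 => intro u v h; simp [minF] at h
    | 1 => intro u v h; simp [minF] at h
    | 2 => intro u v h; simp [minF] at h
    | 3 =>
      intro u v h1 h2
      simp only [minF, Set.mem_insert_iff, Set.mem_singleton_iff, Prod.mk.injEq] at h1 h2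
      rcases h1 with ⟨rfl, rfl⟩ | ⟨rfl, rfl⟩ | ⟨rfl, rfl⟩ | ⟨rfl, rfl⟩ <;>
        rcases h2 with ⟨h, h'⟩ | ⟨h, h'⟩ | ⟨h, h'⟩ | ⟨h, h'⟩ <;>
        first
          | exact absurd h (by decide)
          | exact absurd h' (by decide)
    | (n+4) =>
      intro u v h1 h2
      rcases mem_minF_succ.mp h1 with ⟨hl1, hm1⟩ | ⟨rfl, rfl⟩ <;>
        rcases mem_minF_succ.mp h2 with ⟨hl2, hm2⟩ | ⟨he1, he2⟩
      · exact IH (n+3) (by omega) _ _ hm1 hm2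
      · rw [he1, he2] at hl1
        rw [last_tail, last_head] at hl1
        exact absurd hl1 (by simp)
      · rw [last_tail, last_head] at hl2
        exact absurd hl2 (by simp)
      · exact tail_ne_head he1.symm

lemma injF : ∀ (n : ℕ) (u u' v : Fin n → Bool), (u, v) ∈ minF n → (u', v) ∈ minF n → u = u' := by
  intro n
  induction n using Nat.strong_induction_on with
  | _ n IH =>
    match n with
    | 0 => intro u u' v h; simp [minF] at h
    | 1 => intro u u' v h; simp [minF] at h
    | 2 => intro u u' v h; simp [minF] at h
    | 3 =>
      intro u u' v h1 h2
      simp only [minF, Set.mem_insert_iff, Set.mem_singleton_iff, Prod.mk.injEq] at h1 h2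
      rcases h1 with ⟨rfl, rfl⟩ | ⟨rfl, rfl⟩ | ⟨rfl, rfl⟩ | ⟨rfl, rfl⟩ <;>
        rcases h2 with ⟨rfl, h⟩ | ⟨rfl, h⟩ | ⟨rfl, h⟩ | ⟨rfl, h⟩ <;>
        first
          | exact absurd h (by decide)
          | rfl
    | (n+4) =>
      intro u u' v h1 h2
      rcases mem_minF_succ.mp h1 with ⟨hl1, hm1⟩ | ⟨rfl, rfl⟩ <;>
        rcases mem_minF_succ.mp h2 with ⟨hl2, hm2⟩ | ⟨he1, he2⟩
      · exact snoc_ext (IH (n+3) (by omega) _ _ _ hm1 hm2) (hl1.trans hl2.symm)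
      · exfalso
        rw [he2] at hm1
        rw [init_head] at hm1
        have := (isolF (n+3) _ _ hm1).2.2.2
        apply this
        have : n+3-1 = n+2 := by omega
        rw [this]
      · exfalso
        rw [init_head] at hm2
        have := (isolF (n+3) _ _ hm2).2.2.2
        apply this
        have : n+3-1 = n+2 := by omega
        rw [this]
      · exact he1.symm

/-! ## Periodic closed walks -/

def GoodWalk {V : Type*} (G : SimpleGraph V) (F : Set (V × V)) (k : ℕ) (d : ℕ → V) : Prop :=
  (∀ i, d (i + k) = d i) ∧
  (∀ i, d i = d (i+1) ∨ G.Adj (d i) (d (i+1))) ∧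
  (∀ i, (d (i+1), d (i+2)) ∉ F → (d i, d (i+1)) ∈ F ∧ (d (i+2), d (i+3)) ∈ F) ∧
  (∀ i, (d (i+1), d i) ∉ F)

lemma per_mul {V : Type*} {k : ℕ} {d : ℕ → V} (hper : ∀ i, d (i + k) = d i) :
    ∀ t i, d (i + t * k) = d i := by
  intro t
  induction t with
  | zero => intro i; simp
  | succ t ih =>
    intro i
    have h : i + (t+1) * k = (i + t * k) + k := by ring
    rw [h, hper, ih]

lemma per_mod {V : Type*} {k : ℕ} {d : ℕ → V} (hper : ∀ i, d (i + k) = d i) :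
    ∀ i, d (i % k) = d i := by
  intro i
  conv_rhs => rw [← Nat.mod_add_div i k]
  rw [show i % k + k * (i / k) = i % k + (i / k) * k from by ring, per_mul hper]

lemma mod_succ {g : ℕ} (hg : 0 < g) (j : ℕ) :
    (j+1) % g = if j % g + 1 = g then 0 else j % g + 1 := by
  have h1 : j % g < g := Nat.mod_lt _ hg
  conv_lhs => rw [← Nat.mod_add_div j g]
  rw [show j % g + g * (j / g) + 1 = (j % g + 1) + g * (j/g) from by ring,
    Nat.add_mul_mod_self_left]
  split
  · next h => rw [h]; exact Nat.mod_self g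
  · next h => exact Nat.mod_eq_of_lt (by omega)

lemma subwalk_good {V : Type*} {G : SimpleGraph V} {F : Set (V × V)}
    {d : ℕ → V}
    (hadj : ∀ i, d i = d (i+1) ∨ G.Adj (d i) (d (i+1)))
    (hcw : ∀ i, (d (i+1), d (i+2)) ∉ F → (d i, d (i+1)) ∈ F ∧ (d (i+2), d (i+3)) ∈ F)
    (hrev : ∀ i, (d (i+1), d i) ∉ F)
    (a g : ℕ) (hg : 3 ≤ g) (hrep : d (a + g) = d a)
    (hHA : (d a, d (a+1)) ∈ F ∨ (d (a + (g-1)), d (a + g)) ∈ F)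
    (hnext : (d a, d (a+1)) ∉ F → (d (a+1), d (a+2)) ∈ F) :
    GoodWalk G F g (fun j => d (a + j % g)) := by
  have hg0 : 0 < g := by omega
  have key : ∀ j, d (a + (j+1) % g) = d (a + j % g + 1) := by
    intro j
    rw [mod_succ hg0 j]
    split
    · next h =>
      simp only [Nat.add_zero]
      rw [show a + j % g + 1 = a + (j % g + 1) from by omega, h]
      exact hrep.symm
    · next h => rfl
  refine ⟨fun i => ?_, fun i => ?_, fun i => ?_, fun i => ?_⟩
  · show d (a + (i + g) % g) = d (a + i % g)
    rw [Nat.add_mod_right]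
  · show d (a + i % g) = d (a + (i+1) % g) ∨ G.Adj (d (a + i % g)) (d (a + (i+1) % g))
    rw [key i]
    exact hadj (a + i % g)
  · intro H
    replace H : (d (a + (i+1) % g), d (a + (i+1+1) % g)) ∉ F := H
    rw [key i, key (i+1)] at H
    show (d (a + i % g), d (a + (i+1) % g)) ∈ F ∧
      (d (a + (i+1+1) % g), d (a + (i+1+1+1) % g)) ∈ F
    rw [key i, key (i+1), key (i+1+1)]
    by_cases hc1 : i % g + 1 = g
    · -- wrap at the pair (i, i+1) : H is the pair (d (a+g), d (a+1)) i.e. (d a, d (a+1))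
      have m1 : (i+1) % g = 0 := by rw [mod_succ hg0 i, if_pos hc1]
      have m2 : (i+1+1) % g = 1 := by
        rw [mod_succ hg0 (i+1), m1, if_neg (by omega)]
      rw [m1] at H ⊢
      rw [m2]
      rw [show a + i % g + 1 = a + g from by omega, hrep] at H
      have H' : (d a, d (a+1)) ∉ F := H
      have hin : (d (a + (g-1)), d (a + g)) ∈ F := by
        rcases hHA with h | h
        · exact absurd h H'
        · exact h
      constructor
      · rw [show a + (g-1) = a + i % g from by omega,
          show a + g = a + i % g + 1 from by omega] at hin
        exact hin
      · have := hnext H'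
        exact this
    · have m1 : (i+1) % g = i % g + 1 := by rw [mod_succ hg0 i, if_neg hc1]
      rw [m1] at H ⊢
      by_cases hc2 : i % g + 2 = g
      · -- the pair (i+1, i+2) is the wrap-in pair (d (a+g-1), d (a+g))
        have m2 : (i+1+1) % g = 0 := by
          rw [mod_succ hg0 (i+1), m1, if_pos (by omega)]
        rw [m2]
        have hout : (d a, d (a+1)) ∈ F := by
          rcases hHA with h | h
          · exact h
          · exfalso
            apply H
            rw [show a + (g-1) = a + i % g + 1 from by omega,
              show a + g = a + (i % g + 1) + 1 from by omega] at h
            exact h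
        constructor
        · exact (hcw (a + i % g) H).1
        · simp only [Nat.add_zero]
          rw [show a + (i % g + 1) + 1 = a + g from by omega, hrep]
          exact hout
      · have m2 : (i+1+1) % g = i % g + 2 := by
          rw [mod_succ hg0 (i+1), m1, if_neg (by omega)]
        rw [m2]
        refine ⟨(hcw (a + i % g) H).1, ?_⟩
        have := (hcw (a + i % g) H).2
        rw [show a + (i % g + 1) + 1 = a + i % g + 2 from by omega,
          show a + (i % g + 2) + 1 = a + i % g + 3 from by omega]
        exact this
  · show (d (a + (i+1) % g), d (a + i % g)) ∉ F
    rw [key i]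
    exact hrev (a + i % g)

lemma walk_to_twist {V : Type*} {G : SimpleGraph V} {F : Set (V × V)}
    {k : ℕ} {d : ℕ → V} (hk : 3 ≤ k)
    (hper : ∀ i, d (i + k) = d i)
    (hinj : ∀ a b, a < b → b < k → d a ≠ d b)
    (hadj : ∀ i, G.Adj (d i) (d (i+1)))
    (hcw : ∀ i, (d (i+1), d (i+2)) ∉ F → (d i, d (i+1)) ∈ F ∧ (d (i+2), d (i+3)) ∈ F) :
    HasChainTwist G F := by
  haveI : NeZero k := ⟨by omega⟩
  have keyd : ∀ (i : ZMod k) (t : ℕ), d ((i + (t : ZMod k)).val) = d (i.val + t) := by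
    intro i t
    rw [ZMod.val_add, ZMod.val_natCast]
    rw [show (i.val + t % k) % k = (i.val + t) % k from by
      conv_rhs => rw [Nat.add_mod]
      rw [Nat.mod_eq_of_lt (ZMod.val_lt i)]]
    exact per_mod hper _
  have cA : ∀ i : ZMod k, d ((i + 1).val) = d (i.val + 1) := by
    intro i
    rw [show (1 : ZMod k) = ((1 : ℕ) : ZMod k) from (Nat.cast_one).symm]
    exact keyd i 1
  have cB : ∀ i : ZMod k, d ((i + 2).val) = d (i.val + 2) := by
    intro i
    rw [show (2 : ZMod k) = ((2 : ℕ) : ZMod k) from by norm_cast]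
    exact keyd i 2
  have cC : ∀ i : ZMod k, d ((i - 1).val) = d (i.val + (k-1)) := by
    intro i
    rw [show i - 1 = i + ((k - 1 : ℕ) : ZMod k) from by
      rw [Nat.cast_sub (by omega : 1 ≤ k), Nat.cast_one, ZMod.natCast_self]
      ring]
    exact keyd i (k-1)
  refine ⟨k, fun i => d i.val, hk, ?_, ?_, ?_⟩
  · intro i j h
    simp only at h
    rcases lt_trichotomy i.val j.val with hlt | heq | hlt
    · exact absurd h (hinj _ _ hlt (ZMod.val_lt j))
    · exact ZMod.val_injective k heq
    · exact absurd h.symm (hinj _ _ hlt (ZMod.val_lt i))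
  · intro i
    show G.Adj (d i.val) (d ((i+1).val))
    rw [cA i]
    exact hadj i.val
  · intro i H
    replace H : (d i.val, d ((i+1).val)) ∉ F := H
    rw [cA i] at H
    have hx : (d (i.val + (k-1) + 1), d (i.val + (k-1) + 2)) ∉ F := by
      rw [show i.val + (k-1) + 1 = i.val + k from by omega,
        show i.val + (k-1) + 2 = (i.val + 1) + k from by omega, hper i.val, hper (i.val + 1)]
      exact H
    obtain ⟨F1, F2⟩ := hcw (i.val + (k-1)) hx
    constructor
    · show (d ((i-1).val), d i.val) ∈ F
      rw [cC i]
      rw [show i.val + (k-1) + 1 = i.val + k from by omega, hper i.val] at F1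
      exact F1
    · show (d ((i+1).val), d ((i+2).val)) ∈ F
      rw [cA i, cB i]
      rw [show i.val + (k-1) + 2 = (i.val + 1) + k from by omega,
        show i.val + (k-1) + 3 = (i.val + 2) + k from by omega,
        hper (i.val + 1), hper (i.val + 2)] at F2
      exact F2

lemma core {V : Type*} {G : SimpleGraph V} {F : Set (V × V)}
    (Hirr : ∀ x : V, (x, x) ∉ F) :
    ∀ k (d : ℕ → V), GoodWalk G F k d → 3 ≤ k → HasChainTwist G F := by
  intro k
  induction k using Nat.strong_induction_on with
  | _ k IH =>
    intro d hgw hk3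
    obtain ⟨hper, hadj, hcw, hrev⟩ := hgw
    have hwrap : ∀ a, (d a, d (a+1)) ∉ F →
        (d (a + (k-1)), d (a + (k-1) + 1)) ∈ F ∧ (d (a+1), d (a+2)) ∈ F := by
      intro a ha
      have hx : (d (a + (k-1) + 1), d (a + (k-1) + 2)) ∉ F := by
        rw [show a + (k-1) + 1 = a + k from by omega,
          show a + (k-1) + 2 = (a+1) + k from by omega, hper a, hper (a+1)]
        exact ha
      obtain ⟨F1, F2⟩ := hcw (a + (k-1)) hx
      refine ⟨F1, ?_⟩
      rw [show a + (k-1) + 2 = (a+1) + k from by omega,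
        show a + (k-1) + 3 = (a+2) + k from by omega, hper (a+1), hper (a+2)] at F2
      exact F2
    by_cases hstut : ∃ i, i < k ∧ d i = d (i+1)
    · obtain ⟨i0, hi0, hst⟩ := hstut
      have hxx : (d i0, d (i0+1)) ∉ F := by rw [← hst]; exact Hirr _
      obtain ⟨A1, A2⟩ := hwrap i0 hxx
      rcases Nat.lt_or_ge k 4 with hk4 | hk4
      · exfalso
        apply hrev (i0 + 1)
        rw [show i0 + (k-1) + 1 = i0 + k from by omega,
          show i0 + (k-1) = i0 + 2 from by omega, hper i0, hst] at A1
        exact A1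
      · -- destutter
        have hrep' : d ((i0+1) + (k-1)) = d (i0+1) := by
          rw [show (i0+1) + (k-1) = i0 + k from by omega, hper i0]
          exact hst
        have hHA : (d (i0+1), d ((i0+1)+1)) ∈ F ∨
            (d ((i0+1) + (k-1-1)), d ((i0+1) + (k-1))) ∈ F := by
          right
          rw [show (i0+1) + (k-1-1) = i0 + (k-1) from by omega,
            show (i0+1) + (k-1) = i0 + (k-1) + 1 from by omega]
          exact A1
        exact IH (k-1) (by omega) _
          (subwalk_good hadj hcw hrev (i0+1) (k-1) (by omega) hrep' hHA
            (fun h => (hwrap (i0+1) h).2)) (by omega)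
    · push_neg at hstut
      have hns : ∀ i, d i ≠ d (i+1) := by
        intro i
        have h1 : d i = d (i % k) := (per_mod hper i).symm
        have h2 : d (i+1) = d (i % k + 1) := by
          conv_lhs => rw [← Nat.mod_add_div i k]
          rw [show i % k + k * (i / k) + 1 = (i % k + 1) + (i/k) * k from by ring,
            per_mul hper]
        rw [h1, h2]
        exact hstut _ (Nat.mod_lt _ (by omega))
      by_cases hinj : ∀ a b, a < b → b < k → d a ≠ d b
      · exact walk_to_twist hk3 hper hinj (fun i => (hadj i).resolve_left (hns i)) hcw
      · push_neg at hinj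
        obtain ⟨a, b, hab, hbk, heq⟩ := hinj
        obtain ⟨g, rfl⟩ : ∃ g, b = a + g := ⟨b - a, by omega⟩
        have hg2 : 2 ≤ g := by
          have h1 : g ≠ 1 := by
            intro h
            subst h
            exact hns a heq
          omega
        have hgk : g + 2 ≤ k := by
          have h1 : g ≠ k - 1 := by
            intro h
            apply hns (a + g)
            have : d (a + g + 1) = d (a + g) := by
              rw [show a + g + 1 = a + k from by omega, hper a, heq]
            exact this.symm
          omega
        have hrepg : d (a + g) = d a := heq.symm
        by_cases hHA : (d a, d (a+1)) ∈ F ∨ (d (a + (g-1)), d (a + g)) ∈ F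
        · rcases Nat.lt_or_ge g 3 with hg3 | hg3
          · exfalso
            rcases hHA with h | h
            · apply hrev (a+1)
              rw [show a + 1 + 1 = a + g from by omega, hrepg]
              exact h
            · apply hrev a
              rw [show a + (g-1) = a + 1 from by omega, hrepg] at h
              exact h
          · exact IH g (by omega) _
              (subwalk_good hadj hcw hrev a g hg3 hrepg hHA
                (fun h => (hwrap a h).2)) hg3
        · push_neg at hHA
          obtain ⟨hna, hnb⟩ := hHA
          have houtb : (d (a+g), d (a+g+1)) ∈ F := by
            have hx : (d (a + (g-2) + 1), d (a + (g-2) + 2)) ∉ F := by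
              rw [show a + (g-2) + 1 = a + (g-1) from by omega,
                show a + (g-2) + 2 = a + g from by omega]
              exact hnb
            have h2 := (hcw _ hx).2
            rw [show a + (g-2) + 2 = a + g from by omega,
              show a + (g-2) + 3 = a + g + 1 from by omega] at h2
            exact h2
          have hrep2 : d ((a+g) + (k-g)) = d (a+g) := by
            rw [show (a+g) + (k-g) = a + k from by omega, hper a, hrepg]
          have hHB : (d (a+g), d ((a+g)+1)) ∈ F ∨
              (d ((a+g) + (k-g-1)), d ((a+g) + (k-g))) ∈ F := Or.inl houtb
          rcases Nat.lt_or_ge (k-g) 3 with hh3 | hh3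
          · exfalso
            apply hrev (a+g+1)
            rw [show a + g + 1 + 1 = a + k from by omega, hper a, ← hrepg]
            exact houtb
          · exact IH (k-g) (by omega) _
              (subwalk_good hadj hcw hrev (a+g) (k-g) hh3 hrep2 hHB
                (fun h => (hwrap (a+g) h).2)) hh3

lemma minRel_succ {n : ℕ} {u v : Fin (n+4) → Bool} :
    minRel (n+4) u v ↔ ((u (Fin.last (n+3)) = v (Fin.last (n+3)) ∧
      minRel (n+3) (Fin.init u) (Fin.init v)) ∨ matchRel (n+3) u v) := Iff.rfl

lemma initA {n : ℕ} : Fin.init (vA (n+4)) = oneAt (n+3) [1] :=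
  init_oneAt _ _ (fun _ _ => Iff.rfl)

lemma initB {n : ℕ} : Fin.init (vB (n+4)) = oneAt (n+3) [1] := by
  apply init_oneAt
  intro i hi
  show i ∈ [1, n+4-1] ↔ i ∈ [1]
  simp only [List.mem_cons, List.not_mem_nil, or_false]
  omega

lemma vA_ne_tail {n : ℕ} : vA (n+4) ≠ bridgeTail (n+4) := by
  apply oneAt_ne _ _ (n+2) (by omega)
  simp only [List.mem_cons, List.not_mem_nil, or_false]
  omega

lemma vA_ne_head {n : ℕ} : vA (n+4) ≠ bridgeHead (n+4) := by
  apply oneAt_ne _ _ (n+2) (by omega)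
  simp only [List.mem_cons, List.not_mem_nil, or_false]
  omega

lemma vB_ne_tail {n : ℕ} : vB (n+4) ≠ bridgeTail (n+4) := by
  apply oneAt_ne _ _ (n+3) (by omega)
  simp only [List.mem_cons, List.not_mem_nil, or_false]
  omega

lemma vB_ne_head {n : ℕ} : vB (n+4) ≠ bridgeHead (n+4) := by
  apply oneAt_ne _ _ (n+2) (by omega)
  simp only [List.mem_cons, List.not_mem_nil, or_false]
  omega

/-- Let `n ≥ 4` (written `n = m + 4`). If the arc set `F_n` of the
minority cube `\hat Q_n` contains a chain twist `c` and `F_{n-1}` contains no chain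
twist, then `c` contains the bridge arc `(01 0^{n-4} 1 0, 01 0^{n-4} 1 1)`. -/
theorem chain_twist_contains_bridge (m : ℕ) (k : ℕ) (c : ZMod k → (Fin (m+4) → Bool))
    (hct : IsChainTwist (hatQ (m+4)) (minF (m+4)) c)
    (hprev : ¬ HasChainTwist (hatQ (m+3)) (minF (m+3))) :
    ∃ i, (c i, c (i+1)) = (bridgeTail (m+4), bridgeHead (m+4)) := by
  by_contra hcon
  push_neg at hcon
  obtain ⟨hk3, hinj, hadj, hcw⟩ := hct
  haveI : NeZero k := ⟨by omega⟩
  have two_ne : (2 : ZMod k) ≠ 0 := by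
    intro hh
    have h2 : ((2:ℕ) : ZMod k).val = (0 : ZMod k).val := by
      rw [show ((2:ℕ) : ZMod k) = 2 from by norm_cast, hh]
    rw [ZMod.val_natCast_of_lt (by omega), ZMod.val_zero] at h2
    omega
  apply hprev
  -- adjacency unfolded
  have hadj' : ∀ j : ZMod k, c j ≠ c (j+1) ∧
      (minRel (m+4) (c j) (c (j+1)) ∨ minRel (m+4) (c (j+1)) (c j)) := by
    intro j
    have h := hadj j
    rwa [hatQ, SimpleGraph.fromRel_adj] at h
  -- vA and vB are never on the cycle
  have hAv : ∀ j : ZMod k, c j ≠ vA (m+4) := by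
    intro j hj
    have hout : (c j, c (j+1)) ∉ minF (m+4) := by
      intro h
      rcases mem_minF_succ.mp h with ⟨_, hm⟩ | ⟨h1, _⟩
      · rw [hj, initA] at hm
        exact (isolF (m+3) _ _ hm).1 rfl
      · rw [hj] at h1
        exact vA_ne_tail h1
    have hin := (hcw j hout).1
    rcases mem_minF_succ.mp hin with ⟨_, hm⟩ | ⟨_, h2⟩
    · rw [hj, initA] at hm
      exact (isolF (m+3) _ _ hm).2.1 rfl
    · rw [hj] at h2
      exact vA_ne_head h2
  have hBv : ∀ j : ZMod k, c j ≠ vB (m+4) := by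
    intro j hj
    have hout : (c j, c (j+1)) ∉ minF (m+4) := by
      intro h
      rcases mem_minF_succ.mp h with ⟨_, hm⟩ | ⟨h1, _⟩
      · rw [hj, initB] at hm
        exact (isolF (m+3) _ _ hm).1 rfl
      · rw [hj] at h1
        exact vB_ne_tail h1
    have hin := (hcw j hout).1
    rcases mem_minF_succ.mp hin with ⟨_, hm⟩ | ⟨_, h2⟩
    · rw [hj, initB] at hm
      exact (isolF (m+3) _ _ hm).2.1 rfl
    · rw [hj] at h2
      exact vB_ne_head h2
  -- structure of consecutive pairs
  have hsplit : ∀ j : ZMod k,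
      ((c j) (Fin.last (m+3)) = (c (j+1)) (Fin.last (m+3)) ∧
        (minRel (m+3) (Fin.init (c j)) (Fin.init (c (j+1))) ∨
         minRel (m+3) (Fin.init (c (j+1))) (Fin.init (c j))))
      ∨ Fin.init (c j) = Fin.init (c (j+1)) := by
    intro j
    obtain ⟨hne, hmv⟩ := hadj' j
    rcases hmv with hmv | hmv
    · rcases minRel_succ.mp hmv with ⟨hl, hm⟩ | hmatch
      · exact Or.inl ⟨hl, Or.inl hm⟩
      · rcases hmatch with ⟨hii, _, _, _⟩ | hset | hset
        · exact Or.inr hii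
        · exfalso
          rcases Set.pair_eq_pair_iff.mp hset with ⟨h1, _⟩ | ⟨_, h2⟩
          · exact hAv j h1
          · exact hAv (j+1) h2
        · exfalso
          rcases Set.pair_eq_pair_iff.mp hset with ⟨_, h2⟩ | ⟨h1, _⟩
          · exact hBv (j+1) h2
          · exact hBv j h1
    · rcases minRel_succ.mp hmv with ⟨hl, hm⟩ | hmatch
      · exact Or.inl ⟨hl.symm, Or.inr hm⟩
      · rcases hmatch with ⟨hii, _, _, _⟩ | hset | hset
        · exact Or.inr hii.symm
        · exfalso
          rcases Set.pair_eq_pair_iff.mp hset with ⟨h1, _⟩ | ⟨_, h2⟩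
          · exact hAv (j+1) h1
          · exact hAv j h2
        · exfalso
          rcases Set.pair_eq_pair_iff.mp hset with ⟨_, h2⟩ | ⟨h1, _⟩
          · exact hBv j h2
          · exact hBv (j+1) h1
  -- arcs of the cycle project to arcs
  have hsameF : ∀ j : ZMod k, (c j, c (j+1)) ∈ minF (m+4) →
      (Fin.init (c j), Fin.init (c (j+1))) ∈ minF (m+3) := by
    intro j hj
    rcases mem_minF_succ.mp hj with ⟨_, hm⟩ | ⟨h1, h2⟩
    · exact hm
    · exact absurd (show (c j, c (j+1)) = _ from by rw [h1, h2]) (hcon j)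
  have hprojCW : ∀ j : ZMod k, (Fin.init (c (j+1)), Fin.init (c (j+2))) ∉ minF (m+3) →
      (Fin.init (c j), Fin.init (c (j+1))) ∈ minF (m+3) ∧
      (Fin.init (c (j+2)), Fin.init (c (j+3))) ∈ minF (m+3) := by
    intro j hn
    rw [show (j : ZMod k) + 2 = j + 1 + 1 from by ring] at hn
    have hup : (c (j+1), c (j+1+1)) ∉ minF (m+4) := fun h => hn (hsameF (j+1) h)
    obtain ⟨t1, t2⟩ := hcw (j+1) hup
    rw [show j + 1 - 1 = j from by ring] at t1
    rw [show j + 1 + 2 = j + 1 + 1 + 1 from by ring] at t2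
    have p2 := hsameF (j+1+1) t2
    rw [show j + 1 + 1 + 1 = j + 3 from by ring, show j + 1 + 1 = j + 2 from by ring] at p2
    exact ⟨hsameF j t1, p2⟩
  have hprojRev : ∀ j : ZMod k, (Fin.init (c (j+1)), Fin.init (c j)) ∉ minF (m+3) := by
    intro j h
    by_cases hpq : Fin.init (c j) = Fin.init (c (j+1))
    · rw [hpq] at h
      exact irreflF _ _ h
    · have hl : (c j) (Fin.last (m+3)) = (c (j+1)) (Fin.last (m+3)) := by
        rcases hsplit j with ⟨hl, _⟩ | hii
        · exact hl
        · exact absurd hii hpq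
      have hup : (c j, c (j+1)) ∉ minF (m+4) := by
        intro hF
        exact antisymF _ _ _ (hsameF j hF) h
      obtain ⟨t1, _⟩ := hcw j hup
      rcases mem_minF_succ.mp t1 with ⟨hl1, hm1⟩ | ⟨h1, h2⟩
      · have he : Fin.init (c (j-1)) = Fin.init (c (j+1)) := injF _ _ _ _ hm1 h
        have hee : c (j-1) = c (j+1) := by
          apply snoc_ext he
          rw [hl1, hl]
        have h12 := hinj hee
        apply two_ne
        linear_combination - h12
      · apply hcon (j-1)
        rw [show j - 1 + 1 = j from by ring]
        rw [h1, h2]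
  have hAdjD : ∀ j : ZMod k, Fin.init (c j) = Fin.init (c (j+1)) ∨
      (hatQ (m+3)).Adj (Fin.init (c j)) (Fin.init (c (j+1))) := by
    intro j
    rcases hsplit j with ⟨_, hm⟩ | hii
    · by_cases hpq : Fin.init (c j) = Fin.init (c (j+1))
      · exact Or.inl hpq
      · right
        rw [hatQ, SimpleGraph.fromRel_adj]
        exact ⟨hpq, hm⟩
    · exact Or.inl hii
  -- the projected periodic walk
  have e1 : ∀ i : ℕ, ((i+1 : ℕ) : ZMod k) = (i : ZMod k) + 1 := by
    intro i; push_cast; ring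
  have e2 : ∀ i : ℕ, ((i+2 : ℕ) : ZMod k) = (i : ZMod k) + 2 := by
    intro i; push_cast; ring
  have e3 : ∀ i : ℕ, ((i+3 : ℕ) : ZMod k) = (i : ZMod k) + 3 := by
    intro i; push_cast; ring
  refine core (fun x => irreflF (m+3) x) k
    (fun i => Fin.init (c ((i : ℕ) : ZMod k))) ⟨?_, ?_, ?_, ?_⟩ hk3
  · intro i
    show Fin.init (c ((i + k : ℕ) : ZMod k)) = Fin.init (c ((i : ℕ) : ZMod k))
    have h : ((i + k : ℕ) : ZMod k) = ((i : ℕ) : ZMod k) := by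
      push_cast [ZMod.natCast_self]
      ring
    rw [h]
  · intro i
    show Fin.init (c ((i : ℕ) : ZMod k)) = Fin.init (c ((i+1 : ℕ) : ZMod k)) ∨
      (hatQ (m+3)).Adj (Fin.init (c ((i : ℕ) : ZMod k))) (Fin.init (c ((i+1 : ℕ) : ZMod k)))
    rw [e1 i]
    exact hAdjD (i : ZMod k)
  · intro i hn
    replace hn : (Fin.init (c ((i+1 : ℕ) : ZMod k)), Fin.init (c ((i+2 : ℕ) : ZMod k)))
        ∉ minF (m+3) := hn
    rw [e1 i, e2 i] at hn
    show (Fin.init (c ((i : ℕ) : ZMod k)), Fin.init (c ((i+1 : ℕ) : ZMod k))) ∈ minF (m+3) ∧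
      (Fin.init (c ((i+2 : ℕ) : ZMod k)), Fin.init (c ((i+3 : ℕ) : ZMod k))) ∈ minF (m+3)
    rw [e1 i, e2 i, e3 i]
    exact hprojCW (i : ZMod k) hn
  · intro i
    show (Fin.init (c ((i+1 : ℕ) : ZMod k)), Fin.init (c ((i : ℕ) : ZMod k))) ∉ minF (m+3)
    rw [e1 i]
    exact hprojRev (i : ZMod k)
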